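/- Let 𝒫 and 𝒩 be finite families of subsets of Prop and B ∈ ℕ. There exists an LTL formula φ with Sz(φ) ≤ B such that α^ω ⊨ φ for every α ∈ 𝒫 and α^ω ⊭ φ for every α ∈ 𝒩, if and only if there exists a CTL formula φ' with |φ'| ≤ B such that M_{α^ω} ⊨ φ' for every α ∈ 𝒫 and M_{α^ω} ⊭ φ' for every α ∈ 𝒩. -/

import Mathlib

namespace Temporal

/-- LTL formulas over a set of atomic propositions `P`. -/
inductive LTL (P : Type) : Type where
  | atom : P → LTL P
  | lnot : LTL P → LTL P
  | land : LTL P → LTL P → LTL P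
  | lor : LTL P → LTL P → LTL P
  | limp : LTL P → LTL P → LTL P
  | liff : LTL P → LTL P → LTL P
  | next : LTL P → LTL P
  | fut : LTL P → LTL P
  | glob : LTL P → LTL P
  | untl : LTL P → LTL P → LTL P
  | rel : LTL P → LTL P → LTL P
  | wuntl : LTL P → LTL P → LTL P
  | mrel : LTL P → LTL P → LTL P

variable {P : Type}

/-- Suffix `w[i:]` of an infinite word. -/
def shift (w : ℕ → Set P) (i : ℕ) : ℕ → Set P := fun n => w (n + i)

/-- The constant infinite word `α^ω`. -/
def constW (α : Set P) : ℕ → Set P := fun _ => α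

/-- LTL semantics on infinite words. -/
def LTL.Sat : LTL P → (ℕ → Set P) → Prop
  | .atom p, w => p ∈ w 0
  | .lnot φ, w => ¬ φ.Sat w
  | .land φ ψ, w => φ.Sat w ∧ ψ.Sat w
  | .lor φ ψ, w => φ.Sat w ∨ ψ.Sat w
  | .limp φ ψ, w => ¬ φ.Sat w ∨ ψ.Sat w
  | .liff φ ψ, w => (φ.Sat w ∧ ψ.Sat w) ∨ (¬ φ.Sat w ∧ ¬ ψ.Sat w)
  | .next φ, w => φ.Sat (shift w 1)
  | .fut φ, w => ∃ i, φ.Sat (shift w i)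
  | .glob φ, w => ∀ i, φ.Sat (shift w i)
  | .untl φ ψ, w => ∃ i, ψ.Sat (shift w i) ∧ ∀ j < i, φ.Sat (shift w j)
  | .rel φ ψ, w => ¬ ∃ i, ¬ ψ.Sat (shift w i) ∧ ∀ j < i, ¬ φ.Sat (shift w j)
  | .wuntl φ ψ, w =>
      (∃ i, ψ.Sat (shift w i) ∧ ∀ j < i, φ.Sat (shift w j)) ∨ ∀ i, φ.Sat (shift w i)
  | .mrel φ ψ, w =>
      (¬ ∃ i, ¬ ψ.Sat (shift w i) ∧ ∀ j < i, ¬ φ.Sat (shift w j)) ∧ ∃ i, φ.Sat (shift w i)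

/-- The set of subformulas of an LTL formula. -/
def LTL.SubF : LTL P → Set (LTL P)
  | .atom p => {.atom p}
  | .lnot φ => insert (.lnot φ) φ.SubF
  | .land φ ψ => insert (.land φ ψ) (φ.SubF ∪ ψ.SubF)
  | .lor φ ψ => insert (.lor φ ψ) (φ.SubF ∪ ψ.SubF)
  | .limp φ ψ => insert (.limp φ ψ) (φ.SubF ∪ ψ.SubF)
  | .liff φ ψ => insert (.liff φ ψ) (φ.SubF ∪ ψ.SubF)
  | .next φ => insert (.next φ) φ.SubF
  | .fut φ => insert (.fut φ) φ.SubF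
  | .glob φ => insert (.glob φ) φ.SubF
  | .untl φ ψ => insert (.untl φ ψ) (φ.SubF ∪ ψ.SubF)
  | .rel φ ψ => insert (.rel φ ψ) (φ.SubF ∪ ψ.SubF)
  | .wuntl φ ψ => insert (.wuntl φ ψ) (φ.SubF ∪ ψ.SubF)
  | .mrel φ ψ => insert (.mrel φ ψ) (φ.SubF ∪ ψ.SubF)

/-- The size of an LTL formula: its number of (distinct) subformulas. -/
noncomputable def LTL.Sz (φ : LTL P) : ℕ := φ.SubF.ncard

/-- The set of atomic propositions occurring in a formula. -/
def LTL.props (φ : LTL P) : Set P := {p : P | LTL.atom p ∈ φ.SubF}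

/-- A formula is temporal-free if no temporal operator occurs in it. -/
inductive LTL.TemporalFree : LTL P → Prop
  | atom (p : P) : TemporalFree (.atom p)
  | lnot {φ : LTL P} : TemporalFree φ → TemporalFree (.lnot φ)
  | land {φ ψ : LTL P} : TemporalFree φ → TemporalFree ψ → TemporalFree (.land φ ψ)
  | lor {φ ψ : LTL P} : TemporalFree φ → TemporalFree ψ → TemporalFree (.lor φ ψ)
  | limp {φ ψ : LTL P} : TemporalFree φ → TemporalFree ψ → TemporalFree (.limp φ ψ)
  | liff {φ ψ : LTL P} : TemporalFree φ → TemporalFree ψ → TemporalFree (.liff φ ψ)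

/-- Concise formulas: atoms, and binary combinations of concise formulas over
disjoint sets of propositions. -/
inductive LTL.Concise : LTL P → Prop
  | atom (p : P) : Concise (.atom p)
  | land {φ ψ : LTL P} : Concise φ → Concise ψ → φ.props ∩ ψ.props = ∅ → Concise (.land φ ψ)
  | lor {φ ψ : LTL P} : Concise φ → Concise ψ → φ.props ∩ ψ.props = ∅ → Concise (.lor φ ψ)
  | limp {φ ψ : LTL P} : Concise φ → Concise ψ → φ.props ∩ ψ.props = ∅ → Concise (.limp φ ψ)
  | liff {φ ψ : LTL P} : Concise φ → Concise ψ → φ.props ∩ ψ.props = ∅ → Concise (.liff φ ψ)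
  | untl {φ ψ : LTL P} : Concise φ → Concise ψ → φ.props ∩ ψ.props = ∅ → Concise (.untl φ ψ)
  | rel {φ ψ : LTL P} : Concise φ → Concise ψ → φ.props ∩ ψ.props = ∅ → Concise (.rel φ ψ)
  | wuntl {φ ψ : LTL P} : Concise φ → Concise ψ → φ.props ∩ ψ.props = ∅ → Concise (.wuntl φ ψ)
  | mrel {φ ψ : LTL P} : Concise φ → Concise ψ → φ.props ∩ ψ.props = ∅ → Concise (.mrel φ ψ)

/-- Formulas in which the only binary operator occurring is `∨`. -/
inductive LTL.OnlyOrBin : LTL P → Prop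
  | atom (p : P) : OnlyOrBin (.atom p)
  | lnot {φ : LTL P} : OnlyOrBin φ → OnlyOrBin (.lnot φ)
  | lor {φ ψ : LTL P} : OnlyOrBin φ → OnlyOrBin ψ → OnlyOrBin (.lor φ ψ)
  | next {φ : LTL P} : OnlyOrBin φ → OnlyOrBin (.next φ)
  | fut {φ : LTL P} : OnlyOrBin φ → OnlyOrBin (.fut φ)
  | glob {φ : LTL P} : OnlyOrBin φ → OnlyOrBin (.glob φ)

/-- Formulas that are disjunctions of atomic propositions, built using only `∨`. -/
inductive LTL.OrOfAtoms : LTL P → Prop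
  | atom (p : P) : OrOfAtoms (.atom p)
  | lor {φ ψ : LTL P} : OrOfAtoms φ → OrOfAtoms ψ → OrOfAtoms (.lor φ ψ)

/- ### The 3-SAT reduction.
Variables `x_k` are indexed by `k < m`; the atomic proposition `(k, true)`
represents `x_k` and `(k, false)` represents `x̄_k`. -/

/-- A literal: a variable index together with its polarity. -/
abbrev Lit := ℕ × Bool

/-- A 3-clause. -/
abbrev Clause3 := Lit × Lit × Lit

/-- A literal holds under a valuation. -/
def litSat (v : ℕ → Bool) (l : Lit) : Prop := v l.1 = l.2

/-- A clause holds under a valuation. -/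
def clauseSat (v : ℕ → Bool) (c : Clause3) : Prop :=
  litSat v c.1 ∨ litSat v c.2.1 ∨ litSat v c.2.2

/-- A valuation satisfies a 3-CNF formula (a list of clauses). -/
def cnfSat (v : ℕ → Bool) (Φ : List Clause3) : Prop := ∀ c ∈ Φ, clauseSat v c

/-- All variables of the 3-CNF formula are among `x_0, …, x_{m-1}`. -/
def cnfVars (m : ℕ) (Φ : List Clause3) : Prop :=
  ∀ c ∈ Φ, c.1.1 < m ∧ c.2.1.1 < m ∧ c.2.2.1 < m

/-- The letter `C_i = {l̃₁, l̃₂, l̃₃}` associated with a clause. -/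
def clauseSet (c : Clause3) : Set Lit := {c.1, c.2.1, c.2.2}

/-- The pair `X_k = {x_k, x̄_k}` of propositions associated with variable `x_k`. -/
def rho (k : ℕ) : Set Lit := {(k, true), (k, false)}

/-- The set `𝒫` of positive words of the reduction. -/
def Pos (m : ℕ) (Φ : List Clause3) : Set (ℕ → Set Lit) :=
  {w | (∃ c ∈ Φ, w = constW (clauseSet c)) ∨ ∃ k < m, w = constW (rho k)}

/-- The negative word `η = ∅^ω`. -/
def negWord : ℕ → Set Lit := constW ∅

/-- `φ` separates `𝒫` and `𝒩 = {η}`. -/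
def Separates (m : ℕ) (Φ : List Clause3) (φ : LTL Lit) : Prop :=
  (∀ w ∈ Pos m Φ, φ.Sat w) ∧ ¬ φ.Sat negWord

/-- All propositions of `φ` are among `{x_k, x̄_k : k < m}`. -/
def propsInRange (m : ℕ) (φ : LTL Lit) : Prop := ∀ p ∈ φ.props, p.1 < m

/-- The disjunction `x_0^v ∨ x_1^v ∨ ⋯ ∨ x_{m-1}^v` (for `m ≥ 1`),
where `x_k^v` is the atom `(k, v k)`. -/
def vDisj (v : ℕ → Bool) : ℕ → LTL Lit
  | 0 => .atom (0, v 0)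
  | 1 => .atom (0, v 0)
  | (k + 2) => .lor (vDisj v (k + 1)) (.atom (k + 1, v (k + 1)))

/-- A formula is disjunctive on a set `I` of variable indices. -/
def DisjunctiveOn (I : Set ℕ) (φ : LTL Lit) : Prop :=
  φ.TemporalFree ∧ φ.Concise ∧ φ.OnlyOrBin ∧
    φ.props.ncard = I.ncard ∧ ∀ k ∈ I, (φ.props ∩ rho k).ncard = 1

/-- A formula is `I`-concise for a set `I` of variable indices. -/
def IConciseOn (I : Set ℕ) (φ : LTL Lit) : Prop :=
  φ.Concise ∧ φ.props.ncard = I.ncard ∧ ∀ k ∈ I, (φ.props ∩ rho k).ncard = 1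

/- ### CTL -/

/-- CTL (state) formulas over `P`; a quantified temporal subformula, e.g. `E(φ U ψ)`,
is a single constructor (`Bool` is the path quantifier: `true` = E, `false` = A). -/
inductive CTL (P : Type) : Type where
  | atom : P → CTL P
  | lnot : CTL P → CTL P
  | land : CTL P → CTL P → CTL P
  | lor : CTL P → CTL P → CTL P
  | limp : CTL P → CTL P → CTL P
  | liff : CTL P → CTL P → CTL P
  | qnext : Bool → CTL P → CTL P
  | qfut : Bool → CTL P → CTL P
  | qglob : Bool → CTL P → CTL P
  | quntl : Bool → CTL P → CTL P → CTL P
  | qrel : Bool → CTL P → CTL P → CTL P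
  | qwuntl : Bool → CTL P → CTL P → CTL P
  | qmrel : Bool → CTL P → CTL P → CTL P

/-- A Kripke structure over `P`. -/
structure Kripke (P : Type) where
  S : Type
  I : Set S
  R : S → S → Prop
  total : ∀ s : S, ∃ t : S, R s t
  L : S → Set P

/-- An infinite path of a Kripke structure. -/
def Kripke.IsPath (M : Kripke P) (π : ℕ → M.S) : Prop := ∀ i, M.R (π i) (π (i + 1))

/-- Path quantification: `q = true` is `E` (some path from `s`), `q = false` is `A`. -/
def Kripke.Q (M : Kripke P) (q : Bool) (s : M.S) (pred : (ℕ → M.S) → Prop) : Prop :=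
  if q then ∃ π : ℕ → M.S, M.IsPath π ∧ π 0 = s ∧ pred π
  else ∀ π : ℕ → M.S, M.IsPath π → π 0 = s → pred π

/-- CTL semantics at a state of a Kripke structure. -/
def CTL.Sat (M : Kripke P) : CTL P → M.S → Prop
  | .atom p, s => p ∈ M.L s
  | .lnot φ, s => ¬ φ.Sat M s
  | .land φ ψ, s => φ.Sat M s ∧ ψ.Sat M s
  | .lor φ ψ, s => φ.Sat M s ∨ ψ.Sat M s
  | .limp φ ψ, s => ¬ φ.Sat M s ∨ ψ.Sat M s
  | .liff φ ψ, s => (φ.Sat M s ∧ ψ.Sat M s) ∨ (¬ φ.Sat M s ∧ ¬ ψ.Sat M s)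
  | .qnext q φ, s => M.Q q s fun π => φ.Sat M (π 1)
  | .qfut q φ, s => M.Q q s fun π => ∃ i, φ.Sat M (π i)
  | .qglob q φ, s => M.Q q s fun π => ∀ i, φ.Sat M (π i)
  | .quntl q φ ψ, s => M.Q q s fun π => ∃ i, ψ.Sat M (π i) ∧ ∀ j < i, φ.Sat M (π j)
  | .qrel q φ ψ, s => M.Q q s fun π => ¬ ∃ i, ¬ ψ.Sat M (π i) ∧ ∀ j < i, ¬ φ.Sat M (π j)
  | .qwuntl q φ ψ, s => M.Q q s fun π =>
      (∃ i, ψ.Sat M (π i) ∧ ∀ j < i, φ.Sat M (π j)) ∨ ∀ i, φ.Sat M (π i)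
  | .qmrel q φ ψ, s => M.Q q s fun π =>
      (¬ ∃ i, ¬ ψ.Sat M (π i) ∧ ∀ j < i, ¬ φ.Sat M (π j)) ∧ ∃ i, φ.Sat M (π i)

/-- `M ⊨ φ`: the formula holds at every initial state. -/
def Kripke.Models (M : Kripke P) (φ : CTL P) : Prop := ∀ s ∈ M.I, φ.Sat M s

/-- The set of subformulas of a CTL formula (a quantified temporal subformula counts
as a single subformula together with the subformulas of its arguments). -/
def CTL.SubF : CTL P → Set (CTL P)
  | .atom p => {.atom p}
  | .lnot φ => insert (.lnot φ) φ.SubF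
  | .land φ ψ => insert (.land φ ψ) (φ.SubF ∪ ψ.SubF)
  | .lor φ ψ => insert (.lor φ ψ) (φ.SubF ∪ ψ.SubF)
  | .limp φ ψ => insert (.limp φ ψ) (φ.SubF ∪ ψ.SubF)
  | .liff φ ψ => insert (.liff φ ψ) (φ.SubF ∪ ψ.SubF)
  | .qnext q φ => insert (.qnext q φ) φ.SubF
  | .qfut q φ => insert (.qfut q φ) φ.SubF
  | .qglob q φ => insert (.qglob q φ) φ.SubF
  | .quntl q φ ψ => insert (.quntl q φ ψ) (φ.SubF ∪ ψ.SubF)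
  | .qrel q φ ψ => insert (.qrel q φ ψ) (φ.SubF ∪ ψ.SubF)
  | .qwuntl q φ ψ => insert (.qwuntl q φ ψ) (φ.SubF ∪ ψ.SubF)
  | .qmrel q φ ψ => insert (.qmrel q φ ψ) (φ.SubF ∪ ψ.SubF)

/-- The size of a CTL formula: its number of (distinct) subformulas. -/
noncomputable def CTL.Sz (φ : CTL P) : ℕ := φ.SubF.ncard

/-- `f_{CTL→LTL}`: erase all path quantifiers. -/
def CTL.toLTL : CTL P → LTL P
  | .atom p => .atom p
  | .lnot φ => .lnot φ.toLTL
  | .land φ ψ => .land φ.toLTL ψ.toLTL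
  | .lor φ ψ => .lor φ.toLTL ψ.toLTL
  | .limp φ ψ => .limp φ.toLTL ψ.toLTL
  | .liff φ ψ => .liff φ.toLTL ψ.toLTL
  | .qnext _ φ => .next φ.toLTL
  | .qfut _ φ => .fut φ.toLTL
  | .qglob _ φ => .glob φ.toLTL
  | .quntl _ φ ψ => .untl φ.toLTL ψ.toLTL
  | .qrel _ φ ψ => .rel φ.toLTL ψ.toLTL
  | .qwuntl _ φ ψ => .wuntl φ.toLTL ψ.toLTL
  | .qmrel _ φ ψ => .mrel φ.toLTL ψ.toLTL

/-- `f_{LTL→CTL}`: insert the quantifier `E` before every temporal operator. -/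
def LTL.toCTL : LTL P → CTL P
  | .atom p => .atom p
  | .lnot φ => .lnot φ.toCTL
  | .land φ ψ => .land φ.toCTL ψ.toCTL
  | .lor φ ψ => .lor φ.toCTL ψ.toCTL
  | .limp φ ψ => .limp φ.toCTL ψ.toCTL
  | .liff φ ψ => .liff φ.toCTL ψ.toCTL
  | .next φ => .qnext true φ.toCTL
  | .fut φ => .qfut true φ.toCTL
  | .glob φ => .qglob true φ.toCTL
  | .untl φ ψ => .quntl true φ.toCTL ψ.toCTL
  | .rel φ ψ => .qrel true φ.toCTL ψ.toCTL
  | .wuntl φ ψ => .qwuntl true φ.toCTL ψ.toCTL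
  | .mrel φ ψ => .qmrel true φ.toCTL ψ.toCTL

/-- The one-state Kripke structure `M_{α^ω}`. -/
def singleKripke (α : Set P) : Kripke P where
  S := Unit
  I := Set.univ
  R := fun _ _ => True
  total := fun s => ⟨s, trivial⟩
  L := fun _ => α

/-!
In `M_{α^ω}` the constant path is the only path, so both path quantifiers collapse and a CTL
formula holds there iff its quantifier-erasure `toLTL` holds on `α^ω`. Erasure does not increase
the number of distinct subformulas, and `toCTL` is a right inverse of it that preserves this
number exactly, so separating formulas transfer in both directions within the same size bound.
-/

@[simp]
lemma LTL.toLTL_toCTL (φ : LTL P) : φ.toCTL.toLTL = φ := by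
  induction φ <;> simp [LTL.toCTL, CTL.toLTL, *]

lemma LTL.toCTL_injective : Function.Injective (LTL.toCTL (P := P)) :=
  Function.LeftInverse.injective LTL.toLTL_toCTL

lemma LTL.subF_toCTL (φ : LTL P) : φ.toCTL.SubF = LTL.toCTL '' φ.SubF := by
  induction φ <;>
    simp [LTL.toCTL, LTL.SubF, CTL.SubF, Set.image_insert_eq, Set.image_union, *]

lemma CTL.subF_toLTL (φ : CTL P) : φ.toLTL.SubF = CTL.toLTL '' φ.SubF := by
  induction φ <;>
    simp [LTL.SubF, CTL.SubF, CTL.toLTL, Set.image_insert_eq, Set.image_union, *]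

lemma CTL.subF_finite (φ : CTL P) : φ.SubF.Finite := by
  induction φ <;> simp [CTL.SubF, *]

lemma LTL.sz_toCTL (φ : LTL P) : φ.toCTL.Sz = φ.Sz := by
  rw [CTL.Sz, LTL.Sz, LTL.subF_toCTL, Set.ncard_image_of_injective _ LTL.toCTL_injective]

lemma CTL.sz_toLTL_le (φ : CTL P) : φ.toLTL.Sz ≤ φ.Sz := by
  rw [CTL.Sz, LTL.Sz, CTL.subF_toLTL]
  exact Set.ncard_image_le φ.subF_finite

@[simp]
lemma shift_constW (α : Set P) (i : ℕ) : shift (constW α) i = constW α := rfl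

lemma singleKripke_Q_iff (α : Set P) (q : Bool) (pred : (ℕ → (singleKripke α).S) → Prop) :
    (singleKripke α).Q q () pred ↔ pred fun _ => () := by
  have hpath : (singleKripke α).IsPath fun _ => () := fun _ => trivial
  have hunique (π : ℕ → (singleKripke α).S) : π = fun _ => () := funext fun _ => rfl
  cases q with
  | true => exact ⟨fun ⟨π, _, _, h⟩ => hunique π ▸ h, fun h => ⟨_, hpath, rfl, h⟩⟩
  | false => exact ⟨fun h => h _ hpath rfl, fun h π _ _ => (hunique π).symm ▸ h⟩

lemma CTL.sat_singleKripke_iff (α : Set P) (φ : CTL P) :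
    φ.Sat (singleKripke α) () ↔ φ.toLTL.Sat (constW α) := by
  induction φ with
  | atom p => rfl
  | _ => simp only [CTL.Sat, CTL.toLTL, LTL.Sat, singleKripke_Q_iff, shift_constW, *]

lemma singleKripke_models_iff (α : Set P) (φ : CTL P) :
    (singleKripke α).Models φ ↔ φ.toLTL.Sat (constW α) :=
  ⟨fun h => (φ.sat_singleKripke_iff α).1 (h () trivial),
    fun h _ _ => (φ.sat_singleKripke_iff α).2 h⟩

theorem ltl_ctl_learning_equiv_general (P : Type) (Ps Ns : Set (Set P)) (B : ℕ) :
    (∃ φ : LTL P, φ.Sz ≤ B ∧ (∀ α ∈ Ps, φ.Sat (constW α)) ∧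
        ∀ α ∈ Ns, ¬ φ.Sat (constW α)) ↔
    (∃ φ' : CTL P, φ'.Sz ≤ B ∧ (∀ α ∈ Ps, (singleKripke α).Models φ') ∧
        ∀ α ∈ Ns, ¬ (singleKripke α).Models φ') := by
  simp only [singleKripke_models_iff]
  constructor
  · rintro ⟨φ, hsz, hpos, hneg⟩
    exact ⟨φ.toCTL, φ.sz_toCTL ▸ hsz, by simpa using hpos, by simpa using hneg⟩
  · rintro ⟨φ', hsz, hpos, hneg⟩
    exact ⟨φ'.toLTL, φ'.sz_toLTL_le.trans hsz, hpos, hneg⟩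

/-- an LTL formula of size `≤ B` separates the constant words of `𝒫`
and `𝒩` iff a CTL formula of size `≤ B` separates the corresponding one-state Kripke
structures. -/
theorem ltl_ctl_learning_equiv (P : Type) (Ps Ns : Set (Set P)) (hPs : Ps.Finite)
    (hNs : Ns.Finite) (B : ℕ) :
    (∃ φ : LTL P, φ.Sz ≤ B ∧ (∀ α ∈ Ps, φ.Sat (constW α)) ∧
        ∀ α ∈ Ns, ¬ φ.Sat (constW α)) ↔
    (∃ φ' : CTL P, φ'.Sz ≤ B ∧ (∀ α ∈ Ps, (singleKripke α).Models φ') ∧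
        ∀ α ∈ Ns, ¬ (singleKripke α).Models φ') :=
  ltl_ctl_learning_equiv_general P Ps Ns B

end Temporal
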